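/- Smooth diagonalization of the BDF3 companion matrix near s = 1/11: let M(s) be the 3×3 matrix with rows (18s, −9s, 2s), (1, 0, 0), (0, 1, 0), regarded as a complex matrix. There exist absolute constants κ₀ > 0, B₁ > 0, B₂ > 0 such that for every κ with 0 < κ ≤ κ₀, setting s = (1 − κ)/11, there exist an invertible complex 3×3 matrix N and a diagonal complex 3×3 matrix Λ = diag(λ₁, λ₂, λ₃) with M(s) = N⁻¹ Λ N, max{|λ₁|, |λ₂|, |λ₃|} ≤ 1 − B₁ κ, and the operator norms of N and N⁻¹ (with respect to the Euclidean norm on ℂ³) both at most B₂. -/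

import Mathlib

/-!
At `s = (1 - κ)/11` the characteristic polynomial `x³ - 18 s x² + 9 s x - 2 s` of `M(s)` has, by
the intermediate value theorem, a real root `l ∈ [1 - 2κ, 1 - κ]`. Dividing out `x - l` leaves a
real quadratic with negative discriminant, whose conjugate roots have modulus `√(2s/l) < 1/2`.
Hence the three eigenvalues have modulus at most `1 - κ` and are `1/2`-separated, uniformly in
`κ`. The matrix `V` whose columns are the eigenvectors `(λ², λ, 1)` then has entries of modulus
at most `1` and `|det V| ≥ 1/8`, so the cofactor formula bounds the entries of `V⁻¹`, and
`N = V⁻¹` diagonalizes `M(s)` with uniformly bounded `N` and `N⁻¹`.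
-/

noncomputable section

/-- The BDF3 companion matrix with rows `(18s, -9s, 2s)`, `(1,0,0)`, `(0,1,0)`,
regarded as a complex matrix. -/
def Mc (s : ℝ) : Matrix (Fin 3) (Fin 3) ℂ :=
  !![(18 * s : ℂ), (-9 * s : ℂ), (2 * s : ℂ); 1, 0, 0; 0, 1, 0]

/-- The Euclidean norm on `ℂ³`. -/
def cnorm3 (v : Fin 3 → ℂ) : ℝ := Real.sqrt (∑ i, ‖v i‖ ^ 2)

open Matrix ComplexConjugate

theorem norm_toLp_mulVec_le {𝕜 n : Type*} [RCLike 𝕜] [Fintype n] {A : Matrix n n 𝕜} {C : ℝ}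
    (hC : 0 ≤ C) (hA : ∀ i j, ‖A i j‖ ≤ C) (x : n → 𝕜) :
    ‖WithLp.toLp 2 (A *ᵥ x)‖ ≤ Fintype.card n * C * ‖WithLp.toLp 2 x‖ := by
  set T := ∑ j, ‖x j‖
  have hrow : ∀ i, ‖(A *ᵥ x) i‖ ≤ C * T := fun i => calc
    ‖(A *ᵥ x) i‖ ≤ ∑ j, ‖A i j‖ * ‖x j‖ := by
      simpa only [mulVec, dotProduct, norm_mul] using norm_sum_le Finset.univ fun j => A i j * x j
    _ ≤ ∑ j, C * ‖x j‖ := by gcongr with j; exact hA i j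
    _ = C * T := by rw [Finset.mul_sum]
  have hT : T ^ 2 ≤ Fintype.card n * ‖WithLp.toLp 2 x‖ ^ 2 := by
    rw [EuclideanSpace.norm_sq_eq]
    exact sq_sum_le_card_mul_sum_sq
  refine le_of_pow_le_pow_left₀ two_ne_zero (by positivity) ?_
  calc ‖WithLp.toLp 2 (A *ᵥ x)‖ ^ 2 = ∑ i, ‖(A *ᵥ x) i‖ ^ 2 := EuclideanSpace.norm_sq_eq _
    _ ≤ ∑ _i : n, (C * T) ^ 2 := by
      gcongr with i; exact hrow i
    _ = Fintype.card n * C ^ 2 * T ^ 2 := by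
      simp only [Finset.sum_const, nsmul_eq_mul, Finset.card_univ]; ring
    _ ≤ Fintype.card n * C ^ 2 * (Fintype.card n * ‖WithLp.toLp 2 x‖ ^ 2) := by gcongr
    _ = (Fintype.card n * C * ‖WithLp.toLp 2 x‖) ^ 2 := by ring

theorem cnorm3_eq_norm_toLp (v : Fin 3 → ℂ) : cnorm3 v = ‖WithLp.toLp 2 v‖ :=
  (EuclideanSpace.norm_eq _).symm

theorem cnorm3_mulVec_le {A : Matrix (Fin 3) (Fin 3) ℂ} {C : ℝ} (hC : 0 ≤ C)
    (hA : ∀ i j, ‖A i j‖ ≤ C) (x : Fin 3 → ℂ) : cnorm3 (A *ᵥ x) ≤ 3 * C * cnorm3 x := by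
  simpa [cnorm3_eq_norm_toLp] using norm_toLp_mulVec_le hC hA x

theorem Matrix.norm_inv_apply {n 𝕜 : Type*} [Fintype n] [DecidableEq n] [NormedField 𝕜]
    (A : Matrix n n 𝕜) (i j : n) : ‖A⁻¹ i j‖ = ‖A.adjugate i j‖ / ‖A.det‖ := by
  rw [inv_def, Ring.inverse_eq_inv', Matrix.smul_apply, smul_eq_mul, norm_mul, norm_inv,
    inv_mul_eq_div]

/-- The characteristic polynomial of `Mc s`, evaluated at `x`. -/
def mcCubic {R : Type*} [CommRing R] (s x : R) : R := x ^ 3 - 18 * s * x ^ 2 + 9 * s * x - 2 * s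

theorem Complex.ofReal_mcCubic (s x : ℝ) : ((mcCubic s x : ℝ) : ℂ) = mcCubic (s : ℂ) (x : ℂ) := by
  simp [mcCubic]

theorem mcCubic_eq_zero_of_quadratic_factor {K : Type*} [Field K] {s l x : K} (hl : l ≠ 0)
    (hroot : mcCubic s l = 0) (hx : x ^ 2 + (l - 18 * s) * x + 2 * s / l = 0) :
    mcCubic s x = 0 := by
  unfold mcCubic at *
  have hq : 2 * s / l = l ^ 2 - 18 * s * l + 9 * s := by
    field_simp
    linear_combination -hroot
  rw [hq] at hx
  linear_combination (x - l) * hx + hroot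

theorem Complex.exists_quadratic_root_of_discrim_neg {p q : ℝ} (h : p ^ 2 < 4 * q) :
    ∃ z : ℂ, z ^ 2 + p * z + q = 0 ∧ conj z ^ 2 + p * conj z + q = 0 ∧ ‖z‖ ^ 2 = q ∧
      ‖z - conj z‖ ^ 2 = 4 * q - p ^ 2 := by
  set t := √(4 * q - p ^ 2)
  have ht : t ^ 2 = 4 * q - p ^ 2 := Real.sq_sqrt (by linarith)
  have hz : (⟨-p / 2, t / 2⟩ : ℂ) ^ 2 + p * ⟨-p / 2, t / 2⟩ + q = 0 := by
    apply Complex.ext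
    · simp only [sq, Complex.add_re, Complex.mul_re, Complex.ofReal_re, Complex.ofReal_im,
        Complex.zero_re]
      linear_combination (-1/4 : ℝ) * ht
    · simp only [sq, Complex.add_im, Complex.mul_im, Complex.ofReal_re, Complex.ofReal_im,
        Complex.zero_im]
      ring
  refine ⟨_, hz, by simpa using congrArg conj hz, ?_, ?_⟩
  · rw [Complex.sq_norm, Complex.normSq_mk]
    linear_combination (1/4 : ℝ) * ht
  · rw [Complex.sub_conj, norm_mul, Complex.norm_I, mul_one, Complex.norm_real, Real.norm_eq_abs,
      sq_abs]
    linear_combination ht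

theorem exists_mcCubic_root_mem_Icc {κ : ℝ} (hκ0 : 0 ≤ κ) (hκ : κ ≤ 1 / 100) :
    ∃ l ∈ Set.Icc (1 - 2 * κ) (1 - κ), mcCubic ((1 - κ) / 11) l = 0 := by
  have hcont : ContinuousOn (mcCubic ((1 - κ) / 11)) (Set.Icc (1 - 2 * κ) (1 - κ)) := by
    unfold mcCubic; fun_prop
  refine intermediate_value_Icc (by linarith) hcont ⟨?_, ?_⟩ <;>
    simp only [mcCubic] <;> nlinarith [mul_nonneg hκ0 hκ0, mul_nonneg (mul_nonneg hκ0 hκ0) hκ0]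

def eigenvectorMatrix (L : Fin 3 → ℂ) : Matrix (Fin 3) (Fin 3) ℂ :=
  of fun i j => L j ^ (2 - (i : ℕ))

theorem Mc_mul_eigenvectorMatrix {s : ℝ} {L : Fin 3 → ℂ}
    (hL : ∀ i, mcCubic (s : ℂ) (L i) = 0) :
    Mc s * eigenvectorMatrix L = eigenvectorMatrix L * diagonal L := by
  ext i j
  have hj := hL j
  unfold mcCubic at hj
  rw [mul_diagonal]
  fin_cases i <;> simp [Mc, eigenvectorMatrix, mul_apply, Fin.sum_univ_three]
  · linear_combination -hj
  · ring

theorem det_eigenvectorMatrix (L : Fin 3 → ℂ) :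
    (eigenvectorMatrix L).det = (L 0 - L 1) * (L 1 - L 2) * (L 0 - L 2) := by
  simp [eigenvectorMatrix, det_fin_three]
  ring

theorem norm_eigenvectorMatrix_apply_le {L : Fin 3 → ℂ} (hL : ∀ i, ‖L i‖ ≤ 1) (i j : Fin 3) :
    ‖eigenvectorMatrix L i j‖ ≤ 1 := by
  fin_cases i <;> fin_cases j <;> simp [eigenvectorMatrix, pow_le_one₀, hL]

theorem norm_adjugate_eigenvectorMatrix_apply_le {L : Fin 3 → ℂ} (hL : ∀ i, ‖L i‖ ≤ 1)
    (i j : Fin 3) : ‖(eigenvectorMatrix L).adjugate i j‖ ≤ 2 := by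
  rw [adjugate_fin_three]
  fin_cases i <;> fin_cases j <;> simp [eigenvectorMatrix, neg_add_eq_sub]
  all_goals
    refine (norm_sub_le _ _).trans ?_
    try simp only [norm_mul, norm_pow]
    nlinarith [hL 0, hL 1, hL 2, norm_nonneg (L 0), norm_nonneg (L 1), norm_nonneg (L 2)]

theorem norm_det_eigenvectorMatrix_ge {L : Fin 3 → ℂ} {δ : ℝ} (hδ : 0 ≤ δ)
    (hsep : ∀ i j, i ≠ j → δ ≤ ‖L i - L j‖) : δ ^ 3 ≤ ‖(eigenvectorMatrix L).det‖ := by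
  rw [det_eigenvectorMatrix, norm_mul, norm_mul, pow_three, ← mul_assoc]
  gcongr <;> exact hsep _ _ (by decide)

theorem exists_mcCubic_roots {κ : ℝ} (hκ0 : 0 ≤ κ) (hκ : κ ≤ 1 / 100) :
    ∃ L : Fin 3 → ℂ, (∀ i, mcCubic (((1 - κ) / 11 : ℝ) : ℂ) (L i) = 0) ∧
      (∀ i, ‖L i‖ ≤ 1 - κ) ∧ ∀ i j, i ≠ j → 1 / 2 ≤ ‖L i - L j‖ := by
  obtain ⟨l, ⟨hl₁, hl₂⟩, hl⟩ := exists_mcCubic_root_mem_Icc hκ0 hκ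
  set s := (1 - κ) / 11 with hs
  have hq : 2 * s / l ≤ 19 / 100 := by
    rw [div_le_iff₀ (by linarith)]; linarith
  have hdisc : 1 / 4 ≤ 4 * (2 * s / l) - (l - 18 * s) ^ 2 := by
    have : 2 * s ≤ 2 * s / l := by
      rw [le_div_iff₀ (by linarith)]; nlinarith
    nlinarith
  obtain ⟨z, hz, hz', hzn, hzd⟩ :=
    Complex.exists_quadratic_root_of_discrim_neg (p := l - 18 * s) (q := 2 * s / l) (by linarith)
  have hz_le : ‖z‖ ≤ 11 / 25 := by nlinarith [norm_nonneg z]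
  have hl_sub_z : 1 / 2 ≤ ‖(l : ℂ) - z‖ := calc
    (1 / 2 : ℝ) ≤ ‖(l : ℂ)‖ - ‖z‖ := by
      rw [Complex.norm_real, Real.norm_of_nonneg (by linarith)]; linarith
    _ ≤ ‖(l : ℂ) - z‖ := norm_sub_norm_le _ _
  have hl_sub_conj_z : 1 / 2 ≤ ‖(l : ℂ) - conj z‖ := by
    simpa [← Complex.norm_conj ((l : ℂ) - z)] using hl_sub_z
  have hz_sub_conj_z : 1 / 2 ≤ ‖z - conj z‖ := by nlinarith [norm_nonneg (z - conj z)]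
  have hroot : ∀ x : ℂ, x ^ 2 + ((l - 18 * s : ℝ) : ℂ) * x + ((2 * s / l : ℝ) : ℂ) = 0 →
      mcCubic (s : ℂ) x = 0 := fun x hx =>
    mcCubic_eq_zero_of_quadratic_factor (l := (l : ℂ)) (by exact_mod_cast (by linarith : l ≠ 0))
      (by rw [← Complex.ofReal_mcCubic, hl, Complex.ofReal_zero]) (by push_cast at hx; exact hx)
  refine ⟨![l, z, conj z], ?_, ?_, ?_⟩
  · intro i; fin_cases i
    exacts [show mcCubic (s : ℂ) (l : ℂ) = 0 by
      rw [← Complex.ofReal_mcCubic, hl, Complex.ofReal_zero], hroot z hz, hroot _ hz']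
  · intro i; fin_cases i
    · simpa [abs_of_nonneg (by linarith : 0 ≤ l)] using hl₂
    all_goals simp only [Fin.reduceFinMk, Matrix.cons_val, Complex.norm_conj]; linarith
  · intro i j hij
    fin_cases i <;> fin_cases j <;> simp only [ne_eq, not_true] at hij <;>
      simp only [Fin.reduceFinMk, Matrix.cons_val] <;>
      first | assumption | rwa [norm_sub_rev]

/-- smooth diagonalization of the BDF3 companion matrix near
`s = 1/11`. There exist absolute constants `κ₀, B₁, B₂ > 0` such that for
`0 < κ ≤ κ₀` and `s = (1 - κ)/11`, `M(s) = N⁻¹ Λ N` with `Λ` diagonal,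
all eigenvalues of modulus `≤ 1 - B₁ κ`, and the operator norms of `N` and
`N⁻¹` (w.r.t. the Euclidean norm on `ℂ³`) both at most `B₂`. -/
theorem companion_smooth_diagonalization :
    ∃ κ₀ > (0 : ℝ), ∃ B₁ > (0 : ℝ), ∃ B₂ > (0 : ℝ),
      ∀ κ : ℝ, 0 < κ → κ ≤ κ₀ →
        ∃ (N : Matrix (Fin 3) (Fin 3) ℂ) (lam : Fin 3 → ℂ),
          IsUnit N ∧
          Mc ((1 - κ) / 11) = N⁻¹ * Matrix.diagonal lam * N ∧
          (∀ i, ‖lam i‖ ≤ 1 - B₁ * κ) ∧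
          (∀ x : Fin 3 → ℂ, cnorm3 x = 1 → cnorm3 (N.mulVec x) ≤ B₂) ∧
          (∀ x : Fin 3 → ℂ, cnorm3 x = 1 → cnorm3 (N⁻¹.mulVec x) ≤ B₂) := by
  -- `48 = 3 * 16`, and `16 = 2 / (1/2)³` bounds the entries of `V⁻¹`
  refine ⟨1 / 100, by norm_num, 1, one_pos, 48, by norm_num, fun κ hκ0 hκ => ?_⟩
  obtain ⟨L, hroot, hnorm, hsep⟩ := exists_mcCubic_roots hκ0.le hκ
  set V := eigenvectorMatrix L
  have hL : ∀ i, ‖L i‖ ≤ 1 := fun i => (hnorm i).trans (by linarith)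
  have hdet : (1 / 2) ^ 3 ≤ ‖V.det‖ := norm_det_eigenvectorMatrix_ge (by norm_num) hsep
  have hV : IsUnit V.det := isUnit_iff_ne_zero.2 (norm_pos_iff.1 (by linarith))
  have hVinv : ∀ i j, ‖V⁻¹ i j‖ ≤ 16 := fun i j => by
    rw [norm_inv_apply, div_le_iff₀ (by linarith)]
    linarith [norm_adjugate_eigenvectorMatrix_apply_le hL i j]
  refine ⟨V⁻¹, L, (isUnit_iff_isUnit_det _).2 (isUnit_nonsing_inv_det V hV), ?_,
    by simpa using hnorm, fun x hx => ?_, fun x hx => ?_⟩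
  · rw [nonsing_inv_nonsing_inv V hV, ← Mc_mul_eigenvectorMatrix hroot,
      mul_nonsing_inv_cancel_right _ _ hV]
  · linarith [cnorm3_mulVec_le (by norm_num) hVinv x]
  · rw [nonsing_inv_nonsing_inv V hV]
    linarith [cnorm3_mulVec_le zero_le_one (norm_eigenvectorMatrix_apply_le hL) x]
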